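/- arXiv:1701.01813 — 3 statements merged into one kernel-verified Lean document; each statement's English description precedes it below -/
import Mathlib

section
/- Let a > 0, k > 0 and let N be a positive integer. Then ∫_{(a)} |e^{Nz}·z^{−k−1}|·|S̃₁(z)·S̃₂(z)²| |dz| ≪_k a^{−2−k}·e^{Na}, where S̃₁(z) = ∑_{m≥1} Λ(m)e^{−mz} and S̃₂(z) = ∑_{m≥1} Λ(m)e^{−m²z}. -/
open Complex ArithmeticFunction

noncomputable section

/-- `S̃₁(z) = ∑_{m ≥ 1} Λ(m) e^{-mz}`. -/
def S1 (z : ℂ) : ℂ := ∑' m : ℕ, (vonMangoldt m : ℂ) * Complex.exp (-(m : ℂ) * z)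

/-- `S̃₂(z) = ∑_{m ≥ 1} Λ(m) e^{-m²z}`. -/
def S2 (z : ℂ) : ℂ := ∑' m : ℕ, (vonMangoldt m : ℂ) * Complex.exp (-(m : ℂ) ^ 2 * z)

/-!
On the line `Re z = a` the factor `|e^{Nz}|` is the constant `e^{Na}`, and each exponential sum
is bounded by its value at `z = a`. Abel summation against Chebyshev's bound `ψ(x) ≤ (log 4 + 4) x`
shows `∑ Λ(n) f(n) ≪ ∫₀^∞ f` for every nonnegative decreasing `f`; with `f(t) = e^{-at}` and the
Gaussian `f(t) = e^{-at²}` this gives `S̃₁(a) ≪ 1/a` and `S̃₂(a) ≪ a^{-1/2}`. What remains is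
`∫ |a + iy|^{-k-1} dy = a^{-k} ∫ (1 + t²)^{-(k+1)/2} dt`, which is finite because `k > 0`.
-/

open Finset MeasureTheory

theorem Finset.sum_range_mul_le_sum_range_mul_of_antitone {f g w : ℕ → ℝ} (hw : Antitone w)
    (hw₀ : ∀ n, 0 ≤ w n) (hfg : ∀ n, ∑ i ∈ range n, f i ≤ ∑ i ∈ range n, g i) (n : ℕ) :
    ∑ i ∈ range n, f i * w i ≤ ∑ i ∈ range n, g i * w i := by
  have hD (m : ℕ) : 0 ≤ ∑ i ∈ range m, (g i - f i) := by
    simpa [sum_sub_distrib] using hfg m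
  rw [← sub_nonneg, ← sum_sub_distrib]
  simp_rw [← sub_mul, mul_comm _ (w _), ← smul_eq_mul]
  rw [sum_range_by_parts, sub_nonneg]
  calc ∑ i ∈ range (n - 1), (w (i + 1) - w i) • ∑ j ∈ range (i + 1), (g j - f j) ≤ 0 :=
        sum_nonpos fun i _ => mul_nonpos_of_nonpos_of_nonneg (sub_nonpos.2 (hw i.le_succ)) (hD _)
    _ ≤ w (n - 1) • ∑ i ∈ range n, (g i - f i) := mul_nonneg (hw₀ _) (hD n)

theorem Chebyshev.psi_natCast_eq_sum_range (n : ℕ) :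
    Chebyshev.psi n = ∑ i ∈ range n, Λ (i + 1) := by
  rw [Chebyshev.psi, Nat.floor_natCast, range_eq_Ico, sum_Ico_add', Ico_add_one_add_one_eq_Ioc]

theorem summable_vonMangoldt_mul_and_tsum_le_integral {f : ℝ → ℝ}
    (anti : AntitoneOn f (Set.Ici 0)) (integrable : IntegrableOn f (Set.Ioi 0))
    (nonneg : ∀ t ∈ Set.Ioi (0 : ℝ), 0 ≤ f t) :
    Summable (fun n : ℕ => Λ n * f n) ∧
      ∑' n : ℕ, Λ n * f n ≤ (Real.log 4 + 4) * ∫ t in Set.Ioi 0, f t := by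
  have hpos (i : ℕ) : ((i + 1 : ℕ) : ℝ) ∈ Set.Ioi 0 := Set.mem_Ioi.2 (by positivity)
  have hw : Antitone fun i : ℕ => f (i + 1 : ℕ) := fun i j hij =>
    anti (Set.mem_Ici_of_Ioi (hpos i)) (Set.mem_Ici_of_Ioi (hpos j)) (by simpa using hij)
  have hf : Summable fun i : ℕ => f (i + 1 : ℕ) :=
    (summable_nat_add_iff 1).2 (anti.summable_of_integrableOn_Ioi_zero integrable nonneg)
  have hψ (n : ℕ) : ∑ i ∈ range n, Λ (i + 1) ≤ ∑ i ∈ range n, (Real.log 4 + 4) := by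
    rw [← Chebyshev.psi_natCast_eq_sum_range, sum_const, card_range, nsmul_eq_mul, mul_comm]
    exact Chebyshev.psi_le_const_mul_self n.cast_nonneg
  have hpartial (n : ℕ) :
      ∑ i ∈ range n, Λ (i + 1) * f (i + 1 : ℕ) ≤ (Real.log 4 + 4) * ∫ t in Set.Ioi 0, f t :=
    calc ∑ i ∈ range n, Λ (i + 1) * f (i + 1 : ℕ)
        ≤ ∑ i ∈ range n, (Real.log 4 + 4) * f (i + 1 : ℕ) :=
          sum_range_mul_le_sum_range_mul_of_antitone hw (fun i => nonneg _ (hpos i)) hψ n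
      _ ≤ (Real.log 4 + 4) * ∑' i : ℕ, f (i + 1 : ℕ) := by
          rw [← mul_sum]
          gcongr
          exact hf.sum_le_tsum _ fun i _ => nonneg _ (hpos i)
      _ ≤ (Real.log 4 + 4) * ∫ t in Set.Ioi 0, f t := by
          gcongr
          exact anti.tsum_add_one_le_integral integrable nonneg
  have hterm (i : ℕ) : 0 ≤ Λ (i + 1) * f (i + 1 : ℕ) :=
    mul_nonneg vonMangoldt_nonneg (nonneg _ (hpos i))
  have hs : Summable fun n : ℕ => Λ n * f n :=
    (summable_nat_add_iff 1).1 (summable_of_sum_range_le hterm hpartial)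
  refine ⟨hs, ?_⟩
  rw [hs.tsum_eq_zero_add]
  simpa using Real.tsum_le_of_sum_range_le hterm hpartial

theorem norm_tsum_vonMangoldt_mul_cexp_le {φ : ℝ → ℝ} (hφ : MonotoneOn φ (Set.Ici 0)) {z : ℂ}
    (hz : 0 < z.re) (integrable : IntegrableOn (fun t => Real.exp (-φ t * z.re)) (Set.Ioi 0)) :
    ‖∑' n : ℕ, (Λ n : ℂ) * Complex.exp (-(φ n : ℂ) * z)‖ ≤
      (Real.log 4 + 4) * ∫ t in Set.Ioi 0, Real.exp (-φ t * z.re) := by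
  have anti : AntitoneOn (fun t => Real.exp (-φ t * z.re)) (Set.Ici 0) := fun s hs t ht hst => by
    simpa using mul_le_mul_of_nonneg_right (hφ hs ht hst) hz.le
  obtain ⟨hs, hle⟩ := summable_vonMangoldt_mul_and_tsum_le_integral anti integrable
    fun t _ => (Real.exp_pos _).le
  have hnorm (n : ℕ) :
      ‖(Λ n : ℂ) * Complex.exp (-(φ n : ℂ) * z)‖ = Λ n * Real.exp (-φ n * z.re) := by
    rw [norm_mul, Complex.norm_exp, Complex.norm_real, Real.norm_of_nonneg vonMangoldt_nonneg,
      ← Complex.ofReal_neg, Complex.re_ofReal_mul]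
  exact (norm_tsum_le_tsum_norm (hs.congr fun n => (hnorm n).symm)).trans
    ((tsum_congr hnorm).trans_le hle)

theorem norm_S1_le {z : ℂ} (hz : 0 < z.re) : ‖S1 z‖ ≤ (Real.log 4 + 4) / z.re := by
  have key := norm_tsum_vonMangoldt_mul_cexp_le (φ := id) monotoneOn_id hz ?_
  · have hint : ∫ t in Set.Ioi 0, Real.exp (-id t * z.re) = 1 / z.re := by
      simpa [mul_comm] using integral_exp_mul_Ioi (neg_lt_zero.2 hz) 0
    rw [hint, ← div_eq_mul_one_div] at key
    simpa [S1] using key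
  · simpa [mul_comm] using integrableOn_exp_mul_Ioi (neg_lt_zero.2 hz) 0

theorem norm_S2_le {z : ℂ} (hz : 0 < z.re) :
    ‖S2 z‖ ≤ (Real.log 4 + 4) * (√(Real.pi / z.re) / 2) := by
  have key := norm_tsum_vonMangoldt_mul_cexp_le (φ := fun t => t ^ 2)
    (fun s hs t _ hst => pow_le_pow_left₀ hs hst 2) hz ?_
  · have hint : ∫ t in Set.Ioi 0, Real.exp (-(t ^ 2) * z.re) = √(Real.pi / z.re) / 2 := by
      simpa [mul_comm] using integral_gaussian_Ioi z.re
    rw [hint] at key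
    simpa [S2] using key
  · simpa [mul_comm] using (integrable_exp_neg_mul_sq hz).integrableOn

theorem norm_S1_mul_S2_sq_le {z : ℂ} (hz : 0 < z.re) :
    ‖S1 z * S2 z ^ 2‖ ≤ (Real.log 4 + 4) ^ 3 * Real.pi / 4 / z.re ^ 2 := by
  have hS2 : ‖S2 z‖ ^ 2 ≤ (Real.log 4 + 4) ^ 2 * Real.pi / 4 / z.re :=
    calc ‖S2 z‖ ^ 2 ≤ ((Real.log 4 + 4) * (√(Real.pi / z.re) / 2)) ^ 2 := by
          gcongr
          exact norm_S2_le hz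
      _ = (Real.log 4 + 4) ^ 2 * Real.pi / 4 / z.re := by
          rw [mul_pow, div_pow, Real.sq_sqrt (by positivity)]
          ring
  rw [norm_mul, norm_pow]
  calc ‖S1 z‖ * ‖S2 z‖ ^ 2
      ≤ (Real.log 4 + 4) / z.re * ((Real.log 4 + 4) ^ 2 * Real.pi / 4 / z.re) := by
        gcongr
        exact norm_S1_le hz
    _ = (Real.log 4 + 4) ^ 3 * Real.pi / 4 / z.re ^ 2 := by ring

theorem norm_cexp_mul_cpow_mul_norm_S1_mul_S2_sq_le (N : ℕ) (k : ℝ) {z : ℂ} (hz : 0 < z.re) :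
    ‖Complex.exp (N * z) * z ^ (-(k : ℂ) - 1)‖ * ‖S1 z * S2 z ^ 2‖ ≤
      Real.exp (N * z.re) * ((Real.log 4 + 4) ^ 3 * Real.pi / 4 / z.re ^ 2) *
        ‖z‖ ^ (-(k + 1)) := by
  have hpow : -(k : ℂ) - 1 = ((-(k + 1) : ℝ) : ℂ) := by push_cast; ring
  rw [norm_mul, Complex.norm_exp, ← Complex.ofReal_natCast, Complex.re_ofReal_mul, hpow,
    Complex.norm_cpow_real]
  calc _ ≤ Real.exp (N * z.re) * ‖z‖ ^ (-(k + 1)) *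
        ((Real.log 4 + 4) ^ 3 * Real.pi / 4 / z.re ^ 2) := by
        gcongr
        exact norm_S1_mul_S2_sq_le hz
    _ = _ := by ring

theorem norm_ofReal_add_mul_I_rpow_neg {a : ℝ} (ha : 0 < a) (y s : ℝ) :
    ‖(a : ℂ) + y * I‖ ^ (-s) = a ^ (-s) * (1 + ‖y / a‖ ^ 2) ^ (-s / 2) := by
  have hsq {x : ℝ} (hx : 0 ≤ x) : x ^ (-s) = (x ^ 2) ^ (-s / 2) := by
    rw [← Real.rpow_natCast, ← Real.rpow_mul hx]
    ring_nf
  calc ‖(a : ℂ) + y * I‖ ^ (-s) = (a ^ 2 * (1 + ‖y / a‖ ^ 2)) ^ (-s / 2) := by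
        rw [hsq (norm_nonneg _), Complex.sq_norm, Complex.normSq_add_mul_I, Real.norm_eq_abs,
          sq_abs]
        congr 1
        field_simp
    _ = a ^ (-s) * (1 + ‖y / a‖ ^ 2) ^ (-s / 2) := by
        rw [Real.mul_rpow (by positivity) (by positivity), hsq ha.le]

theorem integrable_norm_ofReal_add_mul_I_rpow_neg {a s : ℝ} (ha : 0 < a) (hs : 1 < s) :
    Integrable fun y : ℝ => ‖(a : ℂ) + y * I‖ ^ (-s) := by
  simp_rw [norm_ofReal_add_mul_I_rpow_neg ha]
  exact ((integrable_rpow_neg_one_add_norm_sq (by simpa using hs)).comp_div ha.ne').const_mul _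

theorem integral_norm_ofReal_add_mul_I_rpow_neg {a : ℝ} (ha : 0 < a) (s : ℝ) :
    ∫ y : ℝ, ‖(a : ℂ) + y * I‖ ^ (-s) = a ^ (1 - s) * ∫ t : ℝ, (1 + ‖t‖ ^ 2) ^ (-s / 2) := by
  simp_rw [norm_ofReal_add_mul_I_rpow_neg ha]
  rw [integral_const_mul, Measure.integral_comp_div (fun t : ℝ => (1 + ‖t‖ ^ 2) ^ (-s / 2)),
    smul_eq_mul, abs_of_pos ha, ← mul_assoc, sub_eq_neg_add, Real.rpow_add ha, Real.rpow_one]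

theorem integral_one_add_norm_sq_rpow_neg_pos {s : ℝ} (hs : 1 < s) :
    0 < ∫ t : ℝ, (1 + ‖t‖ ^ 2) ^ (-s / 2) := by
  rw [integral_pos_iff_support_of_nonneg (fun t => by positivity)
    (integrable_rpow_neg_one_add_norm_sq (by simpa using hs)),
    Function.support_eq_univ fun t => (Real.rpow_pos_of_pos (by positivity) _).ne']
  simp

/-- `∫_{(a)} |e^{Nz} z^{-k-1}| |S̃₁(z) S̃₂(z)²| |dz| ≪_k a^{-2-k} e^{Na}`. -/
theorem line_integral_abs_bound (k : ℝ) (hk : 0 < k) :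
    ∃ C : ℝ, 0 < C ∧ ∀ a : ℝ, 0 < a → ∀ N : ℕ, 0 < N →
      (∫ y : ℝ,
          ‖Complex.exp ((N : ℂ) * ((a : ℂ) + y * Complex.I)) *
              ((a : ℂ) + y * Complex.I) ^ (-(k : ℂ) - 1)‖ *
            ‖S1 ((a : ℂ) + y * Complex.I) * (S2 ((a : ℂ) + y * Complex.I)) ^ 2‖)
        ≤ C * a ^ (-2 - k) * Real.exp (N * a) := by
  set B := (Real.log 4 + 4) ^ 3 * Real.pi / 4
  set J := ∫ t : ℝ, (1 + ‖t‖ ^ 2) ^ (-(k + 1) / 2)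
  have hJ : 0 < J := integral_one_add_norm_sq_rpow_neg_pos (by linarith)
  refine ⟨B * J, by positivity, fun a ha N _ => ?_⟩
  have hre (y : ℝ) : ((a : ℂ) + y * I).re = a := by simp
  calc _ ≤ ∫ y : ℝ, Real.exp (N * a) * (B / a ^ 2) * ‖(a : ℂ) + y * I‖ ^ (-(k + 1)) :=
        integral_mono_of_nonneg (Filter.Eventually.of_forall fun y => by positivity)
          ((integrable_norm_ofReal_add_mul_I_rpow_neg ha (by linarith)).const_mul _)
          (Filter.Eventually.of_forall fun y => by
            simpa only [hre] using norm_cexp_mul_cpow_mul_norm_S1_mul_S2_sq_le N k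
              (z := a + y * I) (by rw [hre]; exact ha))
    _ = B * J * (a ^ (1 - (k + 1)) / a ^ 2) * Real.exp (N * a) := by
        rw [integral_const_mul, integral_norm_ofReal_add_mul_I_rpow_neg ha]
        ring
    _ = B * J * a ^ (-2 - k) * Real.exp (N * a) := by
        rw [← Real.rpow_two, ← Real.rpow_sub ha]
        ring_nf

end
end

section
/- Let N be a positive integer and k > −2 real. Then (1/(8i))·∫_{(1/N)} e^{Nz}·z^{−k−3} dz = N^{k+2}·π/(4·Γ(k+3)), where ∫_{(1/N)} denotes the integral over the vertical line Re(z) = 1/N. -/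
/-!
On the line `z = a + i y` the integral is the Bromwich integral `∫_{(a)} e^{v z} z^{-s} dz` with
`a = 1/N`, `v = N`, `s = k + 3`. Substituting `y = 2π w` turns it into Fourier inversion, at the
point `v`, for the kernel `t^{s-1} e^{-a t}` on `t > 0`: its Fourier transform is
`Γ(s) (a + 2π i w)^{-s}`, which is integrable for `s > 1`, so `∫_{(a)} e^{v z} z^{-s} dz` equals
`2π i v^{s-1} / Γ(s)`. The Fourier transform is the Gamma integral
`∫_0^∞ t^{s-1} e^{-b t} dt = Γ(s) b^{-s}` at complex `b`, which extends from `b > 0` to `Re b > 0`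
by the identity theorem.
-/

open Complex MeasureTheory Set Filter Topology ProbabilityTheory FourierTransform
open scoped NNReal ENNReal Real

/-- Encoding the Laplace transform of `t ^ (s - 1)` as the `complexMGF` of `t ↦ -t` under this
measure makes it analytic on its half-plane of convergence. -/
noncomputable def ioiRpowMeasure (s : ℝ) : Measure ℝ :=
  (volume.restrict (Ioi 0)).withDensity fun t => ((t.toNNReal ^ (s - 1) : ℝ≥0) : ℝ≥0∞)

lemma integral_ioiRpowMeasure (s : ℝ) (g : ℝ → ℂ) :
    ∫ t, g t ∂ioiRpowMeasure s = ∫ t : ℝ in Ioi 0, (t : ℂ) ^ ((s : ℂ) - 1) * g t := by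
  rw [ioiRpowMeasure, integral_withDensity_eq_integral_smul (by fun_prop)]
  refine setIntegral_congr_fun measurableSet_Ioi fun t (ht : 0 < t) => ?_
  rw [NNReal.smul_def, NNReal.coe_rpow, Real.coe_toNNReal _ ht.le, real_smul,
    ofReal_cpow ht.le]
  push_cast; rfl

lemma Ioi_subset_integrableExpSet_ioiRpowMeasure {s : ℝ} (hs : 0 < s) :
    Ioi 0 ⊆ integrableExpSet (fun t => -t) (ioiRpowMeasure s) := by
  intro x (hx : 0 < x)
  rw [integrableExpSet, mem_ofPred_eq, ioiRpowMeasure,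
    integrable_withDensity_iff_integrable_smul (by fun_prop)]
  refine IntegrableOn.congr_fun (f := fun t => t ^ (s - 1) * Real.exp (-(x * t)))
    (by simpa using integrableOn_rpow_mul_exp_neg_mul_rpow (by linarith) one_pos hx)
    (fun t (ht : 0 < t) => ?_) measurableSet_Ioi
  rw [NNReal.smul_def, NNReal.coe_rpow, Real.coe_toNNReal _ ht.le, smul_eq_mul, mul_neg]

lemma complexMGF_ioiRpowMeasure (s : ℝ) (b : ℂ) :
    complexMGF (fun t => -t) (ioiRpowMeasure s) b =
      ∫ t : ℝ in Ioi 0, (t : ℂ) ^ ((s : ℂ) - 1) * cexp (-(b * t)) := by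
  simp only [complexMGF, integral_ioiRpowMeasure, ofReal_neg, mul_neg]

theorem integral_cpow_mul_exp_neg_mul_Ioi_of_re_pos {s : ℝ} (hs : 0 < s) {b : ℂ}
    (hb : 0 < b.re) :
    ∫ t : ℝ in Ioi 0, (t : ℂ) ^ ((s : ℂ) - 1) * cexp (-(b * t)) = Gamma s * b ^ (-(s : ℂ)) := by
  set U : Set ℂ := {z | 0 < z.re}
  have hU : IsOpen U := isOpen_lt continuous_const continuous_re
  have hF : AnalyticOnNhd ℂ (complexMGF (fun t => -t) (ioiRpowMeasure s)) U :=
    analyticOnNhd_complexMGF.mono fun z (hz : 0 < z.re) =>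
      interior_maximal (Ioi_subset_integrableExpSet_ioiRpowMeasure hs) isOpen_Ioi hz
  have hG : AnalyticOnNhd ℂ (fun z => Gamma s * z ^ (-(s : ℂ))) U :=
    DifferentiableOn.analyticOnNhd (fun z (hz : 0 < z.re) =>
      ((differentiableAt_id.cpow_const (.inl hz)).const_mul _).differentiableWithinAt) hU
  have hreal : ∀ r : ℝ, 0 < r →
      complexMGF (fun t => -t) (ioiRpowMeasure s) r = Gamma s * (r : ℂ) ^ (-(s : ℂ)) := by
    intro r hr
    have harg : arg r ≠ π := by simp [arg_ofReal_of_nonneg hr.le, Real.pi_ne_zero.symm]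
    rw [complexMGF_ioiRpowMeasure, integral_cpow_mul_exp_neg_mul_Ioi (by simpa using hs) hr,
      one_div, cpow_neg, ← inv_cpow _ _ harg, mul_comm]
  have hfreq : ∃ᶠ z in 𝓝[≠] (1 : ℂ), complexMGF (fun t => -t) (ioiRpowMeasure s) z =
      Gamma s * z ^ (-(s : ℂ)) := by
    have hto : Tendsto ((↑) : ℝ → ℂ) (𝓝[≠] 1) (𝓝[≠] 1) := by
      simpa using continuous_ofReal.continuousWithinAt.tendsto_nhdsWithin
        (x := (1 : ℝ)) (t := {(1 : ℂ)}ᶜ) fun _ _ => by simp_all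
    exact hto.frequently (eventually_nhdsWithin_of_eventually_nhds
      ((lt_mem_nhds one_pos).mono hreal)).frequently
  rw [← complexMGF_ioiRpowMeasure]
  exact hF.eqOn_of_preconnected_of_frequently_eq hG
    (convex_halfSpace_re_gt 0).isPreconnected (by simp [U]) hfreq hb

lemma integrableOn_cpow_mul_exp_neg_mul_Ioi {s : ℝ} (hs : 0 < s) {a : ℂ} (ha : 0 < a.re) :
    IntegrableOn (fun t : ℝ => (t : ℂ) ^ ((s : ℂ) - 1) * cexp (-(a * t))) (Ioi 0) := by
  have hbound : IntegrableOn (fun t : ℝ => t ^ (s - 1) * Real.exp (-(a.re * t))) (Ioi 0) := by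
    simpa using integrableOn_rpow_mul_exp_neg_mul_rpow (by linarith) one_pos ha
  refine Integrable.mono' hbound ?_ ?_
  · refine ContinuousOn.aestronglyMeasurable (fun t (ht : 0 < t) => ?_) measurableSet_Ioi
    exact ((continuousAt_ofReal_cpow_const t _ (.inr ht.ne')).mul
      (by fun_prop)).continuousWithinAt
  · filter_upwards [ae_restrict_mem measurableSet_Ioi] with t (ht : 0 < t)
    rw [norm_mul, norm_cpow_eq_rpow_re_of_pos ht, norm_exp]
    simp

noncomputable def gammaKernel (s : ℝ) (a : ℂ) : ℝ → ℂ :=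
  (Ioi 0).indicator fun t => (t : ℂ) ^ ((s : ℂ) - 1) * cexp (-(a * t))

lemma integrable_gammaKernel {s : ℝ} (hs : 0 < s) {a : ℂ} (ha : 0 < a.re) :
    Integrable (gammaKernel s a) :=
  (integrable_indicator_iff measurableSet_Ioi).2 (integrableOn_cpow_mul_exp_neg_mul_Ioi hs ha)

lemma continuousAt_gammaKernel (s : ℝ) (a : ℂ) {v : ℝ} (hv : 0 < v) :
    ContinuousAt (gammaKernel s a) v := by
  have : ContinuousAt (fun t : ℝ => (t : ℂ) ^ ((s : ℂ) - 1) * cexp (-(a * t))) v :=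
    (continuousAt_ofReal_cpow_const v _ (.inr hv.ne')).mul (by fun_prop)
  exact this.congr (eventually_of_mem (Ioi_mem_nhds hv) fun t ht => by
    simp only [gammaKernel, indicator_of_mem ht])

lemma integrable_cpow_neg_ofReal_add_mul_I {a s : ℝ} (ha : 0 < a) (hs : 1 < s) :
    Integrable fun y : ℝ => ((a : ℂ) + y * I) ^ (-(s : ℂ)) := by
  set c := (1 + a⁻¹)⁻¹
  have hc : 0 < c := by positivity
  have hlow : ∀ y : ℝ, c * (1 + ‖y‖) ≤ ‖(a : ℂ) + y * I‖ := by
    intro y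
    have hre : 1 ≤ a⁻¹ * ‖(a : ℂ) + y * I‖ :=
      (le_inv_mul_iff₀ ha).2 (by simpa using re_le_norm ((a : ℂ) + y * I))
    have him : ‖y‖ ≤ ‖(a : ℂ) + y * I‖ := by simpa using abs_im_le_norm ((a : ℂ) + y * I)
    calc c * (1 + ‖y‖) ≤ c * (a⁻¹ * ‖(a : ℂ) + y * I‖ + ‖(a : ℂ) + y * I‖) := by gcongr
      _ = ‖(a : ℂ) + y * I‖ := by simp only [c]; field_simp; ring
  have hcont : Continuous fun y : ℝ => ((a : ℂ) + y * I) ^ (-(s : ℂ)) :=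
    (by fun_prop : Continuous fun y : ℝ => (a : ℂ) + y * I).cpow continuous_const
      fun y => mem_slitPlane_iff.2 (.inl (by simpa using ha))
  refine ((integrable_one_add_norm (by simpa using hs)).const_mul (c ^ (-s))).mono'
    hcont.aestronglyMeasurable (ae_of_all _ fun y => ?_)
  rw [← ofReal_neg, norm_cpow_real]
  calc ‖(a : ℂ) + y * I‖ ^ (-s) ≤ (c * (1 + ‖y‖)) ^ (-s) :=
        Real.rpow_le_rpow_of_nonpos (by positivity) (hlow y) (by linarith)
    _ = c ^ (-s) * (1 + ‖y‖) ^ (-s) := Real.mul_rpow hc.le (by positivity)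

lemma fourier_gammaKernel {s : ℝ} (hs : 0 < s) {a : ℂ} (ha : 0 < a.re) (w : ℝ) :
    𝓕 (gammaKernel s a) w = Gamma s * (a + 2 * π * w * I) ^ (-(s : ℂ)) := by
  rw [← integral_cpow_mul_exp_neg_mul_Ioi_of_re_pos hs (by simpa using ha),
    Real.fourier_real_eq_integral_exp_smul, gammaKernel, ← integral_indicator measurableSet_Ioi]
  refine integral_congr_ae (ae_of_all _ fun t => ?_)
  by_cases ht : t ∈ Ioi 0
  · simp only [indicator_of_mem ht, smul_eq_mul]
    rw [mul_left_comm, ← exp_add]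
    push_cast
    ring_nf
  · simp only [indicator_of_notMem ht, smul_zero]

lemma integral_cexp_mul_cpow_neg_add_two_pi_mul_I {a s : ℝ} (ha : 0 < a) (hs : 1 < s) {v : ℝ}
    (hv : 0 < v) :
    ∫ w : ℝ, cexp (2 * π * w * v * I) * ((a : ℂ) + 2 * π * w * I) ^ (-(s : ℂ)) =
      (v : ℂ) ^ ((s : ℂ) - 1) * cexp (-(a * v)) / Gamma s := by
  have hs0 : 0 < s := by linarith
  have hΓ : Gamma (s : ℂ) ≠ 0 := Gamma_ne_zero_of_re_pos (by simpa using hs0)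
  have hF : 𝓕 (gammaKernel s a) =
      fun w : ℝ => Gamma s * ((a : ℂ) + (2 * π * w : ℝ) * I) ^ (-(s : ℂ)) := by
    ext w
    rw [fourier_gammaKernel hs0 (by simpa using ha)]
    push_cast
    rfl
  have hFint : Integrable (𝓕 (gammaKernel s a)) := by
    rw [hF]
    exact ((integrable_cpow_neg_ofReal_add_mul_I ha hs).comp_mul_left' (by positivity)).const_mul _
  have hinv := (integrable_gammaKernel hs0 (by simpa using ha)).fourierInv_fourier_eq hFint
    (continuousAt_gammaKernel s a hv)
  have hv' : gammaKernel s a v = (v : ℂ) ^ ((s : ℂ) - 1) * cexp (-(a * v)) :=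
    indicator_of_mem (mem_Ioi.2 hv) _
  rw [Real.fourierInv_eq', hv'] at hinv
  rw [eq_div_iff hΓ, ← hinv, ← integral_mul_const]
  refine integral_congr_ae (ae_of_all _ fun w => ?_)
  simp only [hF, smul_eq_mul, Real.inner_apply]
  push_cast
  ring_nf

theorem integral_cexp_mul_cpow_neg_vertical_line {a s : ℝ} (ha : 0 < a) (hs : 1 < s) {v : ℝ}
    (hv : 0 < v) :
    ∫ y : ℝ, cexp (v * (a + y * I)) * ((a : ℂ) + y * I) ^ (-(s : ℂ)) =
      2 * π * (v : ℂ) ^ ((s : ℂ) - 1) / Gamma s := by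
  set g : ℝ → ℂ := fun y => cexp (v * (a + y * I)) * ((a : ℂ) + y * I) ^ (-(s : ℂ))
  have hscale : ∫ y, g y = 2 * π * ∫ w, g (2 * π * w) := by
    rw [Measure.integral_comp_mul_left, abs_of_pos (by positivity), real_smul, ← mul_assoc]
    push_cast
    field_simp
  have hg : ∀ w : ℝ, g (2 * π * w) =
      cexp (a * v) * (cexp (2 * π * w * v * I) * ((a : ℂ) + 2 * π * w * I) ^ (-(s : ℂ))) := by
    intro w
    simp only [g]
    rw [← mul_assoc, ← exp_add]
    push_cast
    ring_nf
  rw [hscale, funext hg, integral_const_mul, integral_cexp_mul_cpow_neg_add_two_pi_mul_I ha hs hv]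
  simp only [exp_neg]
  field_simp

/-- Evaluation of the main term `I₁`:
`(1/(8i)) ∫_{(1/N)} e^{Nz} z^{-k-3} dz = N^{k+2} π / (4 Γ(k+3))`. -/
theorem I1_evaluation (N : ℕ) (hN : 0 < N) (k : ℝ) (hk : -2 < k) :
    (1 / (8 * Complex.I)) *
        ∫ y : ℝ,
          Complex.exp ((N : ℂ) * ((1 / (N : ℂ)) + y * Complex.I)) *
            ((1 / (N : ℂ)) + y * Complex.I) ^ (-(k : ℂ) - 3) * Complex.I
      = (N : ℂ) ^ ((k : ℂ) + 2) * (Real.pi : ℂ) / (4 * Complex.Gamma ((k : ℂ) + 3)) := by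
  have hN' : (0 : ℝ) < N := by exact_mod_cast hN
  have hline := integral_cexp_mul_cpow_neg_vertical_line (a := 1 / N) (s := k + 3)
    (by positivity) (by linarith) hN'
  push_cast at hline
  rw [integral_mul_const, show -(k : ℂ) - 3 = -(k + 3) by ring, hline,
    show (k : ℂ) + 3 - 1 = k + 2 by ring]
  field_simp
  ring
end

section
/- Let l, m, r, s ≥ 1 be integers, let a > 0, let N be a positive integer, and let k > (r+s)/2 be real. Suppose E_l and E_m are functions on the vertical line z = a+iy satisfying |E_j(a,y)| ≪ |z|^{1/2} for |y| ≤ a and |E_j(a,y)| ≪ |z|^{1/2}(1 + log²(|y|/a)) for |y| > a (j ∈ {l,m}). Then ∫_{(a)} |e^{Nz}·z^{−k−1}|·|E_l(a,y)|^r·|E_m(a,y)|^s |dz| ≪_{l,m,r,s} e^{Na}·a^{−k+(r+s)/2}. -/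
/-!
On the line `z = a + iy` one has `|e^{Nz} z^{-k-1}| = e^{Na} |z|^{-k-1}`, and the two error
bounds merge into `|E(a,y)| ≪ |z|^{1/2} (1 + log² u)` with `u = 1 + |y|/a`. Since `|z| ≥ a u / 2`
and `(1 + log² u)^{r+s} ≪_ε u^ε`, the integrand is `≪ e^{Na} a^{-1-δ} u^{-1-δ/2}` where
`δ = k - (r+s)/2 > 0`, and the substitution `y = a t` shows that `∫ u^{-1-δ/2} dy` is `a` times
the convergent integral `∫ (1 + |t|)^{-1-δ/2} dt`.
-/

open Complex MeasureTheory

noncomputable section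

namespace Real

lemma one_add_log_sq_le {η u : ℝ} (hη : 0 < η) (hu : 1 ≤ u) :
    1 + log u ^ 2 ≤ (1 + η⁻¹ ^ 2) * u ^ (2 * η) := by
  have hlog : log u ≤ η⁻¹ * u ^ η := by
    rw [← div_eq_inv_mul]; exact log_le_rpow_div (by linarith) hη
  have hlog_sq : log u ^ 2 ≤ η⁻¹ ^ 2 * (u ^ η) ^ 2 := by
    rw [← mul_pow]; exact pow_le_pow_left₀ (log_nonneg hu) hlog 2
  have h_one : 1 ≤ (u ^ η) ^ 2 := one_le_pow₀ (one_le_rpow hu hη.le)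
  rw [mul_comm 2 η, rpow_mul (by linarith), rpow_two]
  nlinarith

lemma exists_one_add_log_sq_pow_le {ε : ℝ} (hε : 0 < ε) (n : ℕ) :
    ∃ D : ℝ, 0 < D ∧ ∀ u : ℝ, 1 ≤ u → (1 + log u ^ 2) ^ n ≤ D * u ^ ε := by
  set η := ε / (2 * (n + 1))
  have hη : 0 < η := by positivity
  refine ⟨(1 + η⁻¹ ^ 2) ^ n, by positivity, fun u hu => ?_⟩
  have h_exp : 2 * η * n ≤ ε := by
    rw [show 2 * η * n = ε * (n / (n + 1)) by simp only [η]; field_simp]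
    exact mul_le_of_le_one_right hε.le ((div_le_one (by positivity)).2 (by linarith))
  calc (1 + log u ^ 2) ^ n ≤ ((1 + η⁻¹ ^ 2) * u ^ (2 * η)) ^ n :=
        pow_le_pow_left₀ (by positivity) (one_add_log_sq_le hη hu) n
    _ = (1 + η⁻¹ ^ 2) ^ n * u ^ (2 * η * n) := by
        rw [mul_pow, rpow_mul_natCast (by linarith)]
    _ ≤ (1 + η⁻¹ ^ 2) ^ n * u ^ ε := by gcongr

end Real

lemma Complex.abs_add_abs_le_two_mul_norm (a y : ℝ) :
    |a| + |y| ≤ 2 * ‖(a : ℂ) + y * I‖ := by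
  have hre := abs_re_le_norm ((a : ℂ) + y * I)
  have him := abs_im_le_norm ((a : ℂ) + y * I)
  simp only [add_re, ofReal_re, mul_re, I_re, mul_zero, ofReal_im, I_im, mul_one, sub_self,
    add_zero, add_im, mul_im, zero_add] at hre him
  linarith

lemma Complex.norm_exp_mul_mul_cpow (t k : ℝ) (z : ℂ) :
    ‖exp (t * z) * z ^ (-(k : ℂ) - 1)‖ = Real.exp (t * z.re) * ‖z‖ ^ (-k - 1) := by
  rw [norm_mul, norm_exp, show -(k : ℂ) - 1 = ((-k - 1 : ℝ) : ℂ) by push_cast; ring,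
    norm_cpow_real, re_ofReal_mul]

lemma norm_le_mul_one_add_log_sq {E : ℝ → ℂ} {C a : ℝ} (hC : 0 ≤ C) (ha : 0 < a)
    (h_near : ∀ y : ℝ, |y| ≤ a → ‖E y‖ ≤ C * ‖(a : ℂ) + y * I‖ ^ ((1 : ℝ) / 2))
    (h_far : ∀ y : ℝ, a < |y| → ‖E y‖ ≤ C * ‖(a : ℂ) + y * I‖ ^ ((1 : ℝ) / 2) *
      (1 + Real.log (|y| / a) ^ 2)) (y : ℝ) :
    ‖E y‖ ≤ C * ‖(a : ℂ) + y * I‖ ^ ((1 : ℝ) / 2) * (1 + Real.log (1 + |y| / a) ^ 2) := by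
  rcases le_or_gt |y| a with hy | hy
  · exact (h_near y hy).trans
      (le_mul_of_one_le_right (by positivity) (le_add_of_nonneg_right (sq_nonneg _)))
  · have h_ratio : 1 < |y| / a := (one_lt_div ha).2 hy
    refine (h_far y hy).trans ?_
    gcongr
    · exact Real.log_nonneg h_ratio.le
    · linarith

lemma rpow_mul_pow_mul_pow_le {X L C₁ C₂ e₁ e₂ : ℝ} (δ : ℝ) (r s : ℕ) (hX : 0 < X)
    (he₁ : 0 ≤ e₁) (he₂ : 0 ≤ e₂)
    (h₁ : e₁ ≤ C₁ * X ^ ((1 : ℝ) / 2) * L) (h₂ : e₂ ≤ C₂ * X ^ ((1 : ℝ) / 2) * L) :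
    X ^ (-(δ + ((r : ℝ) + s) / 2) - 1) * e₁ ^ r * e₂ ^ s ≤
      C₁ ^ r * C₂ ^ s * X ^ (-1 - δ) * L ^ (r + s) := by
  have h_half : (X ^ ((1 : ℝ) / 2)) ^ (r + s) = X ^ (((r : ℝ) + s) / 2) := by
    rw [← Real.rpow_natCast, ← Real.rpow_mul hX.le]; push_cast; ring_nf
  calc X ^ (-(δ + ((r : ℝ) + s) / 2) - 1) * e₁ ^ r * e₂ ^ s
      ≤ X ^ (-(δ + ((r : ℝ) + s) / 2) - 1) * (C₁ * X ^ ((1 : ℝ) / 2) * L) ^ r *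
          (C₂ * X ^ ((1 : ℝ) / 2) * L) ^ s := by
        gcongr
        exact mul_nonneg (by positivity) (pow_nonneg (he₁.trans h₁) r)
    _ = C₁ ^ r * C₂ ^ s * (X ^ (-(δ + ((r : ℝ) + s) / 2) - 1) * (X ^ ((1 : ℝ) / 2)) ^ (r + s)) *
          L ^ (r + s) := by ring
    _ = C₁ ^ r * C₂ ^ s * X ^ (-1 - δ) * L ^ (r + s) := by
        rw [h_half, ← Real.rpow_add hX]; ring_nf

lemma integrable_one_add_abs_rpow {p : ℝ} (hp : 1 < p) :
    Integrable fun t : ℝ => (1 + |t|) ^ (-p) := by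
  simpa only [Real.norm_eq_abs] using
    integrable_one_add_norm (E := ℝ) (μ := volume) (r := p) (by simpa using hp)

lemma integrable_one_add_abs_div_rpow {a p : ℝ} (ha : 0 < a) (hp : 1 < p) :
    Integrable fun y : ℝ => (1 + |y| / a) ^ (-p) := by
  simpa only [abs_div, abs_of_pos ha] using (integrable_one_add_abs_rpow hp).comp_div ha.ne'

lemma integral_one_add_abs_div_rpow {a : ℝ} (ha : 0 < a) (p : ℝ) :
    ∫ y : ℝ, (1 + |y| / a) ^ (-p) = a * ∫ t : ℝ, (1 + |t|) ^ (-p) := by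
  simpa only [abs_div, abs_of_pos ha, smul_eq_mul] using
    Measure.integral_comp_div (fun t => (1 + |t|) ^ (-p)) a

lemma integral_one_add_abs_rpow_pos {p : ℝ} (hp : 1 < p) :
    0 < ∫ t : ℝ, (1 + |t|) ^ (-p) := by
  rw [integral_pos_iff_support_of_nonneg (fun t => by positivity) (integrable_one_add_abs_rpow hp),
    Function.support_eq_univ fun t => (Real.rpow_pos_of_pos (by positivity) _).ne']
  simp

lemma norm_exp_mul_cpow_mul_pow_mul_pow_le {r s : ℕ} {a t δ C₁ C₂ D : ℝ} {E₁ E₂ : ℝ → ℂ} (ha : 0 < a) (hδ : 0 < δ)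
    (hC₁ : 0 ≤ C₁) (hC₂ : 0 ≤ C₂)
    (hD : ∀ u : ℝ, 1 ≤ u → (1 + Real.log u ^ 2) ^ (r + s) ≤ D * u ^ (δ / 2))
    (hE₁ : ∀ y : ℝ, ‖E₁ y‖ ≤
      C₁ * ‖(a : ℂ) + y * I‖ ^ ((1 : ℝ) / 2) * (1 + Real.log (1 + |y| / a) ^ 2))
    (hE₂ : ∀ y : ℝ, ‖E₂ y‖ ≤
      C₂ * ‖(a : ℂ) + y * I‖ ^ ((1 : ℝ) / 2) * (1 + Real.log (1 + |y| / a) ^ 2)) (y : ℝ) :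
    ‖exp (t * ((a : ℂ) + y * I)) * ((a : ℂ) + y * I) ^ (-((δ + ((r : ℝ) + s) / 2 : ℝ) : ℂ) - 1)‖ *
        ‖E₁ y‖ ^ r * ‖E₂ y‖ ^ s ≤
      C₁ ^ r * C₂ ^ s * D * Real.exp (t * a) * (a / 2) ^ (-1 - δ) *
        (1 + |y| / a) ^ (-(1 + δ / 2)) := by
  set z : ℂ := (a : ℂ) + y * I
  set u : ℝ := 1 + |y| / a
  have hu : 1 ≤ u := le_add_of_nonneg_right (by positivity)
  have hz : a / 2 * u ≤ ‖z‖ := by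
    have := abs_add_abs_le_two_mul_norm a y
    rw [abs_of_pos ha] at this
    calc a / 2 * u = (a + |y|) / 2 := by simp only [u]; field_simp
      _ ≤ ‖z‖ := by linarith
  have hz_pos : 0 < ‖z‖ := lt_of_lt_of_le (by positivity) hz
  have hz_re : z.re = a := by simp [z]
  rw [norm_exp_mul_mul_cpow, hz_re]
  calc Real.exp (t * a) * ‖z‖ ^ (-(δ + ((r : ℝ) + s) / 2) - 1) * ‖E₁ y‖ ^ r * ‖E₂ y‖ ^ s
      = Real.exp (t * a) * (‖z‖ ^ (-(δ + ((r : ℝ) + s) / 2) - 1) * ‖E₁ y‖ ^ r * ‖E₂ y‖ ^ s) := by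
        ring
    _ ≤ Real.exp (t * a) * (C₁ ^ r * C₂ ^ s * ‖z‖ ^ (-1 - δ) * (1 + Real.log u ^ 2) ^ (r + s)) := by
        gcongr _ * ?_
        exact rpow_mul_pow_mul_pow_le δ r s hz_pos (norm_nonneg _) (norm_nonneg _)
          (hE₁ y) (hE₂ y)
    _ ≤ Real.exp (t * a) * (C₁ ^ r * C₂ ^ s * (a / 2 * u) ^ (-1 - δ) * (D * u ^ (δ / 2))) := by
        gcongr Real.exp (t * a) * (C₁ ^ r * C₂ ^ s * ?_ * ?_)
        · exact Real.rpow_le_rpow_of_nonpos (by positivity) hz (by linarith)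
        · exact hD u hu
    _ = C₁ ^ r * C₂ ^ s * D * Real.exp (t * a) * (a / 2) ^ (-1 - δ) * u ^ (-(1 + δ / 2)) := by
        rw [Real.mul_rpow (by positivity) (by positivity)]
        have hu_exp : u ^ (-1 - δ) * u ^ (δ / 2) = u ^ (-(1 + δ / 2)) := by
          rw [← Real.rpow_add (by positivity)]; ring_nf
        rw [← hu_exp]; ring

theorem error_terms_integral_bound_general (r s : ℕ)
    (Cl Cm : ℝ) (hCl : 0 < Cl) (hCm : 0 < Cm)
    (k : ℝ) (hk : ((r : ℝ) + s) / 2 < k) :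
    ∃ C : ℝ, 0 < C ∧ ∀ a : ℝ, 0 < a → ∀ N : ℕ, 0 < N → ∀ El Em : ℝ → ℂ,
      (∀ y : ℝ, |y| ≤ a → ‖El y‖ ≤ Cl * ‖(a : ℂ) + y * Complex.I‖ ^ ((1 : ℝ) / 2)) →
      (∀ y : ℝ, a < |y| → ‖El y‖ ≤ Cl * ‖(a : ℂ) + y * Complex.I‖ ^ ((1 : ℝ) / 2) *
          (1 + Real.log (|y| / a) ^ 2)) →
      (∀ y : ℝ, |y| ≤ a → ‖Em y‖ ≤ Cm * ‖(a : ℂ) + y * Complex.I‖ ^ ((1 : ℝ) / 2)) →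
      (∀ y : ℝ, a < |y| → ‖Em y‖ ≤ Cm * ‖(a : ℂ) + y * Complex.I‖ ^ ((1 : ℝ) / 2) *
          (1 + Real.log (|y| / a) ^ 2)) →
      (∫ y : ℝ,
          ‖Complex.exp ((N : ℂ) * ((a : ℂ) + y * Complex.I)) *
              ((a : ℂ) + y * Complex.I) ^ (-(k : ℂ) - 1)‖ *
            ‖El y‖ ^ r * ‖Em y‖ ^ s)
        ≤ C * Real.exp (N * a) * a ^ (-k + ((r : ℝ) + s) / 2) := by
  obtain ⟨δ, hδ, rfl⟩ : ∃ δ, 0 < δ ∧ k = δ + ((r : ℝ) + s) / 2 :=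
    ⟨k - ((r : ℝ) + s) / 2, by linarith, by ring⟩
  obtain ⟨D, hD, hlog⟩ := Real.exists_one_add_log_sq_pow_le (half_pos hδ) (r + s)
  have hp : 1 < 1 + δ / 2 := by linarith
  set J := ∫ t : ℝ, (1 + |t|) ^ (-(1 + δ / 2))
  have hJ : 0 < J := integral_one_add_abs_rpow_pos hp
  refine ⟨Cl ^ r * Cm ^ s * D * 2 ^ (1 + δ) * J, by positivity,
    fun a ha N _ El Em hEl_near hEl_far hEm_near hEm_far => ?_⟩
  have hEl := norm_le_mul_one_add_log_sq hCl.le ha hEl_near hEl_far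
  have hEm := norm_le_mul_one_add_log_sq hCm.le ha hEm_near hEm_far
  calc _ ≤ ∫ y : ℝ, Cl ^ r * Cm ^ s * D * Real.exp (N * a) * (a / 2) ^ (-1 - δ) *
        (1 + |y| / a) ^ (-(1 + δ / 2)) :=
      integral_mono_of_nonneg (ae_of_all _ fun y => by positivity)
        ((integrable_one_add_abs_div_rpow ha hp).const_mul _)
        (ae_of_all _ fun y => by
          exact_mod_cast norm_exp_mul_cpow_mul_pow_mul_pow_le (t := N) ha hδ hCl.le hCm.le hlog hEl hEm y)
    _ = Cl ^ r * Cm ^ s * D * 2 ^ (1 + δ) * J * Real.exp (N * a) * a ^ (-δ) := by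
      have ha_pow : a ^ (-1 - δ) * a = a ^ (-δ) := by
        rw [← Real.rpow_add_one ha.ne']; ring_nf
      have h_two : (2 : ℝ) ^ (-1 - δ) = (2 ^ (1 + δ))⁻¹ := by
        rw [← Real.rpow_neg two_pos.le]; ring_nf
      rw [integral_const_mul, integral_one_add_abs_div_rpow ha, Real.div_rpow ha.le two_pos.le,
        h_two, div_inv_eq_mul, ← ha_pow]
      ring
    _ = _ := by ring_nf

/-- If `E_l, E_m` satisfy the error-term bounds of Lemma 1 on the line `Re z = a`, then
`∫_{(a)} |e^{Nz} z^{-k-1}| |E_l|^r |E_m|^s |dz| ≪_{l,m,r,s} e^{Na} a^{-k+(r+s)/2}`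
for `k > (r+s)/2`. -/
theorem error_terms_integral_bound (l m r s : ℕ)
    (hl : 1 ≤ l) (hm : 1 ≤ m) (hr : 1 ≤ r) (hs : 1 ≤ s)
    (Cl Cm : ℝ) (hCl : 0 < Cl) (hCm : 0 < Cm)
    (k : ℝ) (hk : ((r : ℝ) + s) / 2 < k) :
    ∃ C : ℝ, 0 < C ∧ ∀ a : ℝ, 0 < a → ∀ N : ℕ, 0 < N → ∀ El Em : ℝ → ℂ,
      (∀ y : ℝ, |y| ≤ a → ‖El y‖ ≤ Cl * ‖(a : ℂ) + y * Complex.I‖ ^ ((1 : ℝ) / 2)) →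
      (∀ y : ℝ, a < |y| → ‖El y‖ ≤ Cl * ‖(a : ℂ) + y * Complex.I‖ ^ ((1 : ℝ) / 2) *
          (1 + Real.log (|y| / a) ^ 2)) →
      (∀ y : ℝ, |y| ≤ a → ‖Em y‖ ≤ Cm * ‖(a : ℂ) + y * Complex.I‖ ^ ((1 : ℝ) / 2)) →
      (∀ y : ℝ, a < |y| → ‖Em y‖ ≤ Cm * ‖(a : ℂ) + y * Complex.I‖ ^ ((1 : ℝ) / 2) *
          (1 + Real.log (|y| / a) ^ 2)) →
      (∫ y : ℝ,
          ‖Complex.exp ((N : ℂ) * ((a : ℂ) + y * Complex.I)) *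
              ((a : ℂ) + y * Complex.I) ^ (-(k : ℂ) - 1)‖ *
            ‖El y‖ ^ r * ‖Em y‖ ^ s)
        ≤ C * Real.exp (N * a) * a ^ (-k + ((r : ℝ) + s) / 2) :=
  error_terms_integral_bound_general r s Cl Cm hCl hCm k hk
end
end
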